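/- arXiv:1904.00235 — 4 statements merged into one kernel-verified Lean document; each statement's English description precedes it below -/
import Mathlib

section
/- Let h, k : ℝ → ℝ be differentiable functions and let π be the associated skew-symmetric 5×5 matrix field on ℝ⁵ described in the context. Then π satisfies the Jacobi identity: for all indices i, j, l ∈ {0,1,2,3,4} and all p ∈ ℝ⁵, Σ_{r=0}^{4} ( π_{ir}(p)·∂π_{jl}/∂p_r(p) + π_{jr}(p)·∂π_{li}/∂p_r(p) + π_{lr}(p)·∂π_{ij}/∂p_r(p) ) = 0. Consequently the bracket {f,g}(p) = Σ_{i,j=0}^{4} π_{ij}(p)·(∂f/∂p_i)(p)·(∂g/∂p_j)(p) on differentiable functions on ℝ⁵ is a Poisson bracket. -/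
open scoped BigOperators

/-- The skew-symmetric 5×5 matrix field on ℝ⁵ (coordinates `p 0, …, p 4`) with entries
`π₀₁ = 4p₂`, `π₀₂ = 2p₀ − 2h(p₁)p₃p₄`, `π₀₃ = 2h(p₁)p₂p₄`, `π₀₄ = 2k(p₁)p₂p₃`,
`π₁₂ = −2p₁`, `π₁₃ = 0`, `π₁₄ = 0`, `π₂₃ = h(p₁)p₁p₄`, `π₂₄ = k(p₁)p₁p₃`, `π₃₄ = 0`. -/
noncomputable def piM (h k : ℝ → ℝ) (p : Fin 5 → ℝ) : Matrix (Fin 5) (Fin 5) ℝ :=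
  !![0, 4 * p 2, 2 * p 0 - 2 * h (p 1) * p 3 * p 4, 2 * h (p 1) * p 2 * p 4,
       2 * k (p 1) * p 2 * p 3;
     -(4 * p 2), 0, -(2 * p 1), 0, 0;
     -(2 * p 0 - 2 * h (p 1) * p 3 * p 4), 2 * p 1, 0, h (p 1) * p 1 * p 4,
       k (p 1) * p 1 * p 3;
     -(2 * h (p 1) * p 2 * p 4), 0, -(h (p 1) * p 1 * p 4), 0, 0;
     -(2 * k (p 1) * p 2 * p 3), 0, -(k (p 1) * p 1 * p 3), 0, 0]

/-!
The Jacobiator of a skew-symmetric matrix field is invariant under cyclic permutations of its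
three indices and changes sign when the first two are swapped, so it vanishes identically once it
vanishes on strictly increasing triples. For `piM` there are ten such triples, and on each of them
the Jacobiator is a polynomial in `p`, `h(p₁)`, `k(p₁)`, `h'(p₁)`, `k'(p₁)` that cancels
identically.
-/

section PartialDerivatives

variable {𝕜 : Type*} [NontriviallyNormedField 𝕜] {ι : Type*}

theorem fderiv_eval (i : ι) (p : ι → 𝕜) :
    fderiv 𝕜 (fun q : ι → 𝕜 => q i) p = ContinuousLinearMap.proj i :=
  (hasFDerivAt_apply i p).fderiv

theorem fderiv_comp_eval [Fintype ι] {g : 𝕜 → 𝕜} (i : ι) (p : ι → 𝕜)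
    (hg : DifferentiableAt 𝕜 g (p i)) :
    fderiv 𝕜 (fun q : ι → 𝕜 => g (q i)) p = deriv g (p i) • ContinuousLinearMap.proj i :=
  (hg.hasDerivAt.comp_hasFDerivAt p (hasFDerivAt_apply (𝕜 := 𝕜) i p)).fderiv

end PartialDerivatives

-- The zero set of `f` is closed under all permutations of the arguments, and every triple is a
-- permutation either of one with equal first two entries or of a strictly increasing one.
theorem eq_zero_of_rotate_of_swap {ι G : Type*} [LinearOrder ι] [AddGroup G] [IsAddTorsionFree G]
    {f : ι → ι → ι → G} (rotate : ∀ i j l, f i j l = f j l i)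
    (swap : ∀ i j l, f j i l = -f i j l) (sorted : ∀ i j l, i < j → j < l → f i j l = 0)
    (i j l : ι) : f i j l = 0 := by
  have diag (i l : ι) : f i i l = 0 := self_eq_neg.mp (swap i i l)
  have rot {i j l : ι} (h : f i j l = 0) : f j l i = 0 := by rwa [← rotate]
  have swp {i j l : ι} (h : f i j l = 0) : f j i l = 0 := by rw [swap, h, neg_zero]
  rcases lt_trichotomy i j with hij | hij | hij <;>
    rcases lt_trichotomy j l with hjl | hjl | hjl <;>
    rcases lt_trichotomy i l with hil | hil | hil <;>
    subst_vars <;>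
    first
    | order
    | exact diag _ _
    | exact rot (diag _ _)
    | exact rot (rot (diag _ _))
    | exact sorted _ _ _ ‹_› ‹_›
    | exact swp (sorted _ _ _ ‹_› ‹_›)
    | exact rot (sorted _ _ _ ‹_› ‹_›)
    | exact rot (rot (sorted _ _ _ ‹_› ‹_›))
    | exact swp (rot (sorted _ _ _ ‹_› ‹_›))
    | exact swp (rot (rot (sorted _ _ _ ‹_› ‹_›)))

section Jacobiator

variable {ι : Type*} [Fintype ι] [DecidableEq ι]

noncomputable def jacobiator (π : (ι → ℝ) → Matrix ι ι ℝ) (p : ι → ℝ) (i j l : ι) : ℝ :=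
  ∑ r, (π p i r * fderiv ℝ (fun q => π q j l) p (Pi.single r 1)
    + π p j r * fderiv ℝ (fun q => π q l i) p (Pi.single r 1)
    + π p l r * fderiv ℝ (fun q => π q i j) p (Pi.single r 1))

theorem jacobiator_rotate (π : (ι → ℝ) → Matrix ι ι ℝ) (p : ι → ℝ) (i j l : ι) :
    jacobiator π p i j l = jacobiator π p j l i :=
  Finset.sum_congr rfl fun _ _ => by ring

theorem jacobiator_swap {π : (ι → ℝ) → Matrix ι ι ℝ} (hπ : ∀ q, (π q).transpose = -π q)
    (p : ι → ℝ) (i j l : ι) : jacobiator π p j i l = -jacobiator π p i j l := by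
  have fderiv_swap (a b : ι) :
      fderiv ℝ (fun q => π q b a) p = -fderiv ℝ (fun q => π q a b) p := by
    rw [← fderiv_fun_neg]
    congr 1 with q
    rw [← Matrix.transpose_apply (π q), hπ, Matrix.neg_apply]
  rw [jacobiator, jacobiator, fderiv_swap l i, fderiv_swap j l, fderiv_swap i j,
    ← Finset.sum_neg_distrib]
  refine Finset.sum_congr rfl fun _ _ => ?_
  simp only [neg_apply]
  ring

theorem jacobiator_eq_zero_of_sorted [LinearOrder ι] {π : (ι → ℝ) → Matrix ι ι ℝ}
    (hπ : ∀ q, (π q).transpose = -π q) (p : ι → ℝ)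
    (sorted : ∀ i j l, i < j → j < l → jacobiator π p i j l = 0) (i j l : ι) :
    jacobiator π p i j l = 0 :=
  eq_zero_of_rotate_of_swap (jacobiator_rotate π p) (jacobiator_swap hπ p) sorted i j l

end Jacobiator

theorem piM_transpose (h k : ℝ → ℝ) (p : Fin 5 → ℝ) : (piM h k p).transpose = -piM h k p := by
  ext a b
  fin_cases a <;> fin_cases b <;> simp [piM]

theorem jacobiator_piM_of_lt {h k : ℝ → ℝ} (hh : Differentiable ℝ h) (hk : Differentiable ℝ k)
    (p : Fin 5 → ℝ) (i j l : Fin 5) (hij : i < j) (hjl : j < l) :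
    jacobiator (piM h k) p i j l = 0 := by
  fin_cases i <;> fin_cases j <;> fin_cases l <;>
    simp only [Fin.reduceFinMk, Fin.reduceLT] at hij hjl ⊢
  all_goals
    simp (disch := fun_prop) only [jacobiator, piM, Fin.sum_univ_five, fderiv_fun_mul,
      fderiv_fun_sub, fderiv_fun_neg, fderiv_fun_const, fderiv_eval, fderiv_comp_eval,
      Pi.single_apply, Matrix.of_apply, Matrix.cons_val', Matrix.cons_val_zero,
      Matrix.cons_val_one, Matrix.cons_val, add_apply, sub_apply, neg_apply, smul_apply,
      ContinuousLinearMap.proj_apply, zero_apply, Fin.reduceEq, ↓reduceIte, Pi.zero_apply,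
      smul_eq_mul]
    ring

/-- The matrix field `piM h k` satisfies the Jacobi identity, i.e. the associated
bracket `{f,g}(p) = Σᵢⱼ πᵢⱼ(p) ∂f/∂pᵢ ∂g/∂pⱼ` is a Poisson bracket on ℝ⁵. -/
theorem piM_jacobi_identity (h k : ℝ → ℝ) (hh : Differentiable ℝ h)
    (hk : Differentiable ℝ k) (i j l : Fin 5) (p : Fin 5 → ℝ) :
    ∑ r : Fin 5,
      (piM h k p i r * fderiv ℝ (fun q => piM h k q j l) p (Pi.single r 1)
        + piM h k p j r * fderiv ℝ (fun q => piM h k q l i) p (Pi.single r 1)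
        + piM h k p l r * fderiv ℝ (fun q => piM h k q i j) p (Pi.single r 1)) = 0 :=
  jacobiator_eq_zero_of_sorted (piM_transpose h k) p (jacobiator_piM_of_lt hh hk p) i j l
end

section
/- Let h, k : ℝ → ℝ be differentiable and let π be the associated skew-symmetric 5×5 matrix field on ℝ⁵ described in the context. Suppose f, g : ℝ → ℝ are differentiable and satisfy f'(s) = −(1/2)·k(s)·g(s) and g'(s) = −(1/2)·h(s)·f(s) for all s ∈ ℝ. Then the function J(p) := f(p₁)·p₃ + g(p₁)·p₄ is a Casimir of π: for every i ∈ {0,1,2,3,4} and every p ∈ ℝ⁵, Σ_{j=0}^{4} π_{ij}(p)·(∂J/∂p_j)(p) = 0. -/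
open scoped BigOperators

/-!
The gradient of `J` is `(0, f'(p₁)p₃ + g'(p₁)p₄, 0, f(p₁), g(p₁))`. Every vector `v` with
`v₀ = v₂ = 0` and `2v₁ + h(p₁)p₄v₃ + k(p₁)p₃v₄ = 0` lies in the kernel of `π(p)`: rows 1, 3, 4
only involve `v₀, v₂`, and rows 0 and 2 are `2p₂` and `p₁` times that linear relation.
The ODE for `(f, g)` is exactly what makes the gradient of `J` satisfy the relation.
-/

open ContinuousLinearMap in
theorem hasFDerivAt_comp_apply_mul_apply {ι : Type*} [Fintype ι] {f : ℝ → ℝ} {a b : ι}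
    {p : ι → ℝ} (hf : DifferentiableAt ℝ f (p a)) :
    HasFDerivAt (fun q : ι → ℝ => f (q a) * q b)
      ((deriv f (p a) * p b) • (proj a : (ι → ℝ) →L[ℝ] ℝ) + f (p a) • proj b) p := by
  refine ((hf.hasDerivAt.comp_hasFDerivAt p (hasFDerivAt_apply a p)).mul
    (hasFDerivAt_apply b p)).congr_fderiv ?_
  ext v
  simp only [add_apply, smul_apply, proj_apply, smul_eq_mul, Function.comp_apply]
  ring

open Matrix in
theorem piM_mulVec_eq_zero (h k : ℝ → ℝ) (p v : Fin 5 → ℝ) (hv0 : v 0 = 0) (hv2 : v 2 = 0)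
    (hv1 : 2 * v 1 + h (p 1) * p 4 * v 3 + k (p 1) * p 3 * v 4 = 0) :
    piM h k p *ᵥ v = 0 := by
  ext i
  simp only [Matrix.mulVec, dotProduct, Fin.sum_univ_five, hv0, hv2]
  fin_cases i <;> simp [piM]
  · linear_combination 2 * p 2 * hv1
  · linear_combination p 1 * hv1

theorem casimir_of_piM_general (h k f g : ℝ → ℝ) (hf : Differentiable ℝ f) (hg : Differentiable ℝ g)
    (hf' : ∀ s : ℝ, deriv f s = -(1 / 2) * k s * g s)
    (hg' : ∀ s : ℝ, deriv g s = -(1 / 2) * h s * f s)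
    (i : Fin 5) (p : Fin 5 → ℝ) :
    ∑ j : Fin 5,
      piM h k p i j *
        fderiv ℝ (fun q : Fin 5 → ℝ => f (q 1) * q 3 + g (q 1) * q 4) p (Pi.single j 1)
      = 0 := by
  have hJ : HasFDerivAt (fun q : Fin 5 → ℝ => f (q 1) * q 3 + g (q 1) * q 4) _ p :=
    (hasFDerivAt_comp_apply_mul_apply (hf (p 1))).add
      (hasFDerivAt_comp_apply_mul_apply (hg (p 1)))
  set gradJ : Fin 5 → ℝ := fun j =>
    fderiv ℝ (fun q : Fin 5 → ℝ => f (q 1) * q 3 + g (q 1) * q 4) p (Pi.single j 1)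
  show (piM h k p).mulVec gradJ i = 0
  rw [piM_mulVec_eq_zero, Pi.zero_apply]
  case hv0 => simp [gradJ, hJ.fderiv]
  case hv2 => simp [gradJ, hJ.fderiv]
  case hv1 =>
    simp [gradJ, hJ.fderiv, hf', hg']
    ring

/-- If `f' = −(1/2)·k·g` and `g' = −(1/2)·h·f`, then `J(p) = f(p₁)p₃ + g(p₁)p₄`
is a Casimir of the matrix field `piM h k`. -/
theorem casimir_of_piM (h k f g : ℝ → ℝ) (hh : Differentiable ℝ h)
    (hk : Differentiable ℝ k) (hf : Differentiable ℝ f) (hg : Differentiable ℝ g)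
    (hf' : ∀ s : ℝ, deriv f s = -(1 / 2) * k s * g s)
    (hg' : ∀ s : ℝ, deriv g s = -(1 / 2) * h s * f s)
    (i : Fin 5) (p : Fin 5 → ℝ) :
    ∑ j : Fin 5,
      piM h k p i j *
        fderiv ℝ (fun q : Fin 5 → ℝ => f (q 1) * q 3 + g (q 1) * q 4) p (Pi.single j 1)
      = 0 :=
  casimir_of_piM_general h k f g hf hg hf' hg' i p
end

section
/- Let h, k : ℝ → ℝ be differentiable and let π be the associated skew-symmetric 5×5 matrix field on ℝ⁵ described in the context. Then the function C(p) := p₀p₁ − p₂² − p₃² is a Casimir of π: for every i ∈ {0,1,2,3,4} and every p ∈ ℝ⁵, Σ_{j=0}^{4} π_{ij}(p)·(∂C/∂p_j)(p) = 0. -/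
open scoped BigOperators

def gradCasimir (p : Fin 5 → ℝ) : Fin 5 → ℝ :=
  ![p 1, p 0, -(2 * p 2), -(2 * p 3), 0]

lemma fderiv_casimir_apply (p v : Fin 5 → ℝ) :
    fderiv ℝ (fun q : Fin 5 → ℝ => q 0 * q 1 - (q 2) ^ 2 - (q 3) ^ 2) p v
      = gradCasimir p ⬝ᵥ v := by
  have coord (j : Fin 5) := hasFDerivAt_apply (𝕜 := ℝ) j p
  have hC : HasFDerivAt (fun q : Fin 5 → ℝ => q 0 * q 1 - (q 2) ^ 2 - (q 3) ^ 2) _ p :=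
    (((coord 0).mul (coord 1)).sub ((coord 2).pow 2)).sub ((coord 3).pow 2)
  rw [hC.fderiv]
  simp only [sub_apply, add_apply, smul_apply, ContinuousLinearMap.proj_apply, smul_eq_mul,
    nsmul_eq_mul, dotProduct, gradCasimir, Fin.sum_univ_five, Matrix.cons_val_zero,
    Matrix.cons_val_one, Matrix.cons_val]
  ring

lemma piM_mulVec_gradCasimir (h k : ℝ → ℝ) (p : Fin 5 → ℝ) :
    (piM h k p).mulVec (gradCasimir p) = 0 := by
  ext i
  fin_cases i <;> simp [piM, gradCasimir] <;> ring

theorem casimir_C_of_piM_general (h k : ℝ → ℝ) (i : Fin 5) (p : Fin 5 → ℝ) :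
    ∑ j : Fin 5,
      piM h k p i j *
        fderiv ℝ (fun q : Fin 5 → ℝ => q 0 * q 1 - (q 2) ^ 2 - (q 3) ^ 2) p (Pi.single j 1)
      = 0 := by
  simp only [fderiv_casimir_apply, dotProduct_single_one]
  exact congrFun (piM_mulVec_gradCasimir h k p) i

/-- The function `C(p) = p₀p₁ − p₂² − p₃²` is a Casimir of the matrix field `piM h k`. -/
theorem casimir_C_of_piM (h k : ℝ → ℝ) (hh : Differentiable ℝ h)
    (hk : Differentiable ℝ k) (i : Fin 5) (p : Fin 5 → ℝ) :
    ∑ j : Fin 5,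
      piM h k p i j *
        fderiv ℝ (fun q : Fin 5 → ℝ => q 0 * q 1 - (q 2) ^ 2 - (q 3) ^ 2) p (Pi.single j 1)
      = 0 :=
  casimir_C_of_piM_general h k i p
end

section
/- Let S² = { γ ∈ ℝ³ : γ₁² + γ₂² + γ₃² = 1 }. The image of the map T : S² × ℝ³ → ℝ⁵ defined by T(γ, M) = ( γ₃, γ₁M₂ − γ₂M₁, γ₁M₁ + γ₂M₂, M₃, M₁² + M₂² ) is exactly the set { (τ₁,τ₂,τ₃,τ₄,τ₅) ∈ ℝ⁵ : |τ₁| ≤ 1, τ₅ ≥ 0, τ₂² + τ₃² = (1 − τ₁²)·τ₅ }. -/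
/-!
Identify `(γ₁, γ₂)` and `(M₁, M₂)` with complex numbers `w` and `z`; then `τ₃ + iτ₂ = conj w · z`,
so `τ₂² + τ₃² = |w|²|z|² = (1 - γ₃²)τ₅`. Conversely, a point of the semi-algebraic set is hit by
taking `w` real with `|w|² = 1 - τ₁²` and `z = (τ₃ + iτ₂)/w`; when `|τ₁| = 1` the equation forces
`τ₂ = τ₃ = 0` and `w = 0` works with any `z` of modulus `√τ₅`.
-/

theorem sq_cross_add_sq_dot {R : Type*} [CommRing R] (a b c d : R) :
    (a * d - b * c) ^ 2 + (a * c + b * d) ^ 2 = (a ^ 2 + b ^ 2) * (c ^ 2 + d ^ 2) := by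
  ring

theorem exists_cross_dot_eq_of_sq_add_sq_eq_mul {p s a b : ℝ} (hp : 0 ≤ p) (hs : 0 ≤ s)
    (h : a ^ 2 + b ^ 2 = p * s) :
    ∃ u v m n : ℝ, u ^ 2 + v ^ 2 = p ∧ m ^ 2 + n ^ 2 = s ∧ u * n - v * m = a ∧ u * m + v * n = b := by
  rcases hp.eq_or_lt with rfl | hp
  · obtain ⟨rfl, rfl⟩ : a = 0 ∧ b = 0 := by
      simpa only [sq, zero_mul, mul_self_add_mul_self_eq_zero] using h
    exact ⟨0, 0, √s, 0, by ring, by simp [hs], by ring, by ring⟩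
  · have hu : 0 < √p := Real.sqrt_pos.2 hp
    have hu2 : √p ^ 2 = p := Real.sq_sqrt hp.le
    refine ⟨√p, 0, b / √p, a / √p, by simp [hu2], ?_, by field_simp; ring, by field_simp; ring⟩
    rw [div_pow, div_pow, ← add_div, hu2, add_comm, h, mul_div_cancel_left₀ _ hp.ne']

/-- The image of the invariant map
`T(γ, M) = (γ₃, γ₁M₂ − γ₂M₁, γ₁M₁ + γ₂M₂, M₃, M₁² + M₂²)` on `S² × ℝ³` is exactly the
semi-algebraic set `{|τ₁| ≤ 1, τ₅ ≥ 0, τ₂² + τ₃² = (1 − τ₁²)τ₅}` in ℝ⁵. -/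
theorem image_invariant_map_solid :
    {τ : Fin 5 → ℝ | ∃ γ M : Fin 3 → ℝ,
        γ 0 ^ 2 + γ 1 ^ 2 + γ 2 ^ 2 = 1 ∧
        τ = ![γ 2, γ 0 * M 1 - γ 1 * M 0, γ 0 * M 0 + γ 1 * M 1, M 2, M 0 ^ 2 + M 1 ^ 2]}
    = {τ : Fin 5 → ℝ | |τ 0| ≤ 1 ∧ 0 ≤ τ 4
        ∧ (τ 1) ^ 2 + (τ 2) ^ 2 = (1 - (τ 0) ^ 2) * τ 4} := by
  ext τ
  constructor
  · rintro ⟨γ, M, hγ, rfl⟩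
    show |γ 2| ≤ 1 ∧ 0 ≤ M 0 ^ 2 + M 1 ^ 2 ∧
      (γ 0 * M 1 - γ 1 * M 0) ^ 2 + (γ 0 * M 0 + γ 1 * M 1) ^ 2 = (1 - γ 2 ^ 2) * (M 0 ^ 2 + M 1 ^ 2)
    have hplanar : γ 0 ^ 2 + γ 1 ^ 2 = 1 - γ 2 ^ 2 := by linarith
    refine ⟨(sq_le_one_iff_abs_le_one _).1 ?_, by positivity, by rw [sq_cross_add_sq_dot, hplanar]⟩
    linarith [sq_nonneg (γ 0), sq_nonneg (γ 1)]
  · rintro ⟨hτ₀, hτ₄, hτ⟩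
    have hp : 0 ≤ 1 - τ 0 ^ 2 := sub_nonneg.2 ((sq_le_one_iff_abs_le_one _).2 hτ₀)
    obtain ⟨u, v, m, n, huv, hmn, hcross, hdot⟩ :=
      exists_cross_dot_eq_of_sq_add_sq_eq_mul hp hτ₄ hτ
    refine ⟨![u, v, τ 0], ![m, n, τ 3], by simp [huv], ?_⟩
    ext i
    fin_cases i <;> simp [hcross, hdot, hmn]
end
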